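/- arXiv:2207.09203 — 2 statements merged into one kernel-verified Lean document; each statement's English description precedes it below -/
import Mathlib

section
/- Let A be a nonunital separable C*-algebra, τ a trace on A, and let τ̃ be the trace on the unitization A♯ of A defined by τ̃(a + λ1) = τ(a) + λ for a ∈ A, λ ∈ ℂ. Then τ is an MA trace on A if and only if τ̃ is an MA trace on A♯. -/
open scoped Matrix.Norms.L2Operator ComplexOrder
open Matrix Filter TopologicalSpace

noncomputable section

/-- `n × n` complex matrices endowed with the ℓ²-operator norm. -/
abbrev MatC (n : ℕ) : Type := Matrix (Fin n) (Fin n) ℂ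

/-- A map into matrices is `*`-linear if it is `ℂ`-linear and star-preserving. -/
def IsStarLinear {A : Type*} [AddCommGroup A] [Module ℂ A] [Star A] {n : ℕ}
    (φ : A → MatC n) : Prop :=
  IsLinearMap ℂ φ ∧ ∀ a, φ (star a) = star (φ a)

/-- The normalized trace `trₙ` on `n × n` matrices. -/
def trn {n : ℕ} (α : MatC n) : ℂ := Matrix.trace α / (n : ℂ)

/-- The 2-norm `‖α‖_{2,tr} = trₙ(α*α)^{1/2}` induced by the normalized trace. -/
def l2tr {n : ℕ} (α : MatC n) : ℝ := Real.sqrt (trn (star α * α)).re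

/-- A C*-algebra `A` is MF: for every finite `F ⊆ A` and `ε > 0` there are `n ≥ 1` and a
`*`-linear map `φ : A → Mₙ` which is `ε`-almost multiplicative and `ε`-almost norm-preserving
on `F`. -/
def IsMFAlgebra (A : Type*) [NonUnitalCStarAlgebra A] : Prop :=
  ∀ (F : Finset A) (ε : ℝ), 0 < ε → ∃ n : ℕ, 0 < n ∧ ∃ φ : A → MatC n,
    IsStarLinear φ ∧
    (∀ a ∈ F, ∀ a' ∈ F, ‖φ (a * a') - φ a * φ a'‖ < ε) ∧
    (∀ a ∈ F, ‖a‖ - ε < ‖φ a‖)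

/-- A trace: a positive linear functional satisfying `τ(ab) = τ(ba)`. -/
def IsTrace {A : Type*} [NonUnitalRing A] [Star A] [Module ℂ A] (τ : A →ₗ[ℂ] ℂ) : Prop :=
  (∀ a, 0 ≤ τ (star a * a)) ∧ ∀ a b, τ (a * b) = τ (b * a)

/-- An MF trace. -/
def IsMFTrace {A : Type*} [NonUnitalRing A] [Star A] [Module ℂ A] (τ : A →ₗ[ℂ] ℂ) : Prop :=
  ∀ (F : Finset A) (ε : ℝ), 0 < ε → ∃ n : ℕ, 0 < n ∧ ∃ φ : A → MatC n,
    IsStarLinear φ ∧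
    (∀ a ∈ F, ∀ a' ∈ F, ‖φ (a * a') - φ a * φ a'‖ < ε) ∧
    (∀ a ∈ F, ‖τ a - trn (φ a)‖ < ε)

/-- An MA (matricially amenable) trace. -/
def IsMATrace {A : Type*} [NonUnitalRing A] [Star A] [Module ℂ A] (τ : A →ₗ[ℂ] ℂ) : Prop :=
  ∀ (F : Finset A) (ε : ℝ), 0 < ε → ∃ n : ℕ, 0 < n ∧ ∃ φ : A → MatC n,
    IsStarLinear φ ∧
    (∀ a ∈ F, ∀ a' ∈ F, l2tr (φ (a * a') - φ a * φ a') < ε) ∧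
    (∀ a ∈ F, ‖τ a - trn (φ a)‖ < ε)

/-- An MF set of operators on a Hilbert space. -/
def IsMFSet {H : Type*} [NormedAddCommGroup H] [InnerProductSpace ℂ H] [CompleteSpace H]
    (M : Set (H →L[ℂ] H)) : Prop :=
  ∀ (F : Finset (H →L[ℂ] H)), ↑F ⊆ M → ∀ (H₀ : Finset H) (ε : ℝ), 0 < ε →
    ∃ P : H →L[ℂ] H, IsSelfAdjoint P ∧ P * P = P ∧
      (∀ T ∈ F, ‖P * T - T * P‖ < ε) ∧ ∀ x ∈ H₀, ‖x‖ - ε < ‖P x‖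

/-!
Restricting along `A → A♯` turns approximate matrix models of `τ̃` into models of `τ`.
Conversely a model `φ` of `τ` extends to `A♯` by `φ̃(a + λ1) = φ(a) + λ·1`: adjoining scalars
does not change the multiplicativity defect, `φ̃(zw) - φ̃(z)φ̃(w) = φ(ab) - φ(a)φ(b)`, and
`trₙ(λ·1) = λ`.
-/

lemma trn_add_smul_one {n : ℕ} (hn : n ≠ 0) (α : MatC n) (c : ℂ) :
    trn (α + c • 1) = trn α + c := by
  have hnC : (n : ℂ) ≠ 0 := Nat.cast_ne_zero.mpr hn
  simp only [trn, trace_add, trace_smul, trace_one, Fintype.card_fin, add_div, smul_eq_mul]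
  rw [mul_div_assoc, div_self hnC, mul_one]

section Restriction

variable {A B : Type*} [NonUnitalRing A] [Star A] [Module ℂ A]
  [NonUnitalRing B] [Star B] [Module ℂ B]

lemma IsStarLinear.comp_nonUnitalStarAlgHom {n : ℕ} {φ : B → MatC n} (hφ : IsStarLinear φ)
    (f : A →⋆ₙₐ[ℂ] B) : IsStarLinear (φ ∘ f) := by
  obtain ⟨hlin, hstar⟩ := hφ
  refine ⟨⟨fun a b => ?_, fun c a => ?_⟩, fun a => ?_⟩
  · simp only [Function.comp_apply, map_add, hlin.map_add]
  · simp only [Function.comp_apply, map_smul, hlin.map_smul]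
  · simp only [Function.comp_apply, map_star, hstar]

lemma IsMATrace.of_comp_nonUnitalStarAlgHom {τ : B →ₗ[ℂ] ℂ} (hτ : IsMATrace τ)
    (f : A →⋆ₙₐ[ℂ] B) {σ : A →ₗ[ℂ] ℂ} (hσ : ∀ a, σ a = τ (f a)) : IsMATrace σ := by
  classical
  intro F ε hε
  obtain ⟨n, hn, φ, hφ, hmul, htr⟩ := hτ (F.image f) ε hε
  refine ⟨n, hn, φ ∘ f, hφ.comp_nonUnitalStarAlgHom f, fun a ha b hb => ?_, fun a ha => ?_⟩
  · simpa only [Function.comp_apply, map_mul] using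
      hmul _ (Finset.mem_image_of_mem f ha) _ (Finset.mem_image_of_mem f hb)
  · simpa only [Function.comp_apply, hσ] using htr _ (Finset.mem_image_of_mem f ha)

end Restriction

section Extension

variable {A : Type*} [NonUnitalRing A] [Module ℂ A]

def unitizationExtend {n : ℕ} (φ : A → MatC n) (z : Unitization ℂ A) : MatC n :=
  φ z.snd + z.fst • 1

lemma IsStarLinear.unitizationExtend [Star A] {n : ℕ} {φ : A → MatC n} (hφ : IsStarLinear φ) :
    IsStarLinear (unitizationExtend φ) := by
  obtain ⟨hlin, hstar⟩ := hφ
  refine ⟨⟨fun z w => ?_, fun c z => ?_⟩, fun z => ?_⟩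
  · simp only [_root_.unitizationExtend, Unitization.snd_add, Unitization.fst_add,
      hlin.map_add, add_smul]
    abel
  · simp only [_root_.unitizationExtend, Unitization.snd_smul, Unitization.fst_smul,
      hlin.map_smul, smul_add, smul_smul, smul_eq_mul]
  · simp only [_root_.unitizationExtend, Unitization.snd_star, Unitization.fst_star, hstar,
      star_add, star_smul, star_one, RCLike.star_def]

lemma unitizationExtend_mul_sub_mul {n : ℕ} {φ : A → MatC n} (hφ : IsLinearMap ℂ φ)
    (z w : Unitization ℂ A) :
    unitizationExtend φ (z * w) - unitizationExtend φ z * unitizationExtend φ w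
      = φ (z.snd * w.snd) - φ z.snd * φ w.snd := by
  simp only [unitizationExtend, Unitization.snd_mul, Unitization.fst_mul, hφ.map_add,
    hφ.map_smul, mul_add, add_mul, smul_mul_assoc, Matrix.mul_smul, one_mul, mul_one, smul_smul]
  abel

lemma IsMATrace.unitization [Star A] [IsScalarTower ℂ A A] [SMulCommClass ℂ A A]
    {τ : A →ₗ[ℂ] ℂ} (hτ : IsMATrace τ) {τt : Unitization ℂ A →ₗ[ℂ] ℂ}
    (hτt : ∀ z, τt z = τ z.snd + z.fst) : IsMATrace τt := by
  classical
  intro F ε hε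
  obtain ⟨n, hn, φ, hφ, hmul, htr⟩ := hτ (F.image fun z => z.snd) ε hε
  refine ⟨n, hn, unitizationExtend φ, hφ.unitizationExtend, fun z hz w hw => ?_, fun z hz => ?_⟩
  · rw [unitizationExtend_mul_sub_mul hφ.1]
    exact hmul _ (Finset.mem_image_of_mem _ hz) _ (Finset.mem_image_of_mem _ hw)
  · rw [hτt, unitizationExtend, trn_add_smul_one hn.ne', add_sub_add_right_eq_sub]
    exact htr _ (Finset.mem_image_of_mem _ hz)

end Extension

theorem isMATrace_unitization_iff_general (A : Type*) [NonUnitalCStarAlgebra A]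
    (τ : A →ₗ[ℂ] ℂ)
    (τt : Unitization ℂ A →ₗ[ℂ] ℂ) (hτt : ∀ z : Unitization ℂ A, τt z = τ z.snd + z.fst) :
    IsMATrace τ ↔ IsMATrace τt :=
  ⟨fun h => h.unitization hτt, fun h =>
    h.of_comp_nonUnitalStarAlgHom (Unitization.inrNonUnitalStarAlgHom ℂ A) fun a => by
      simp [hτt]⟩

/-- For a nonunital separable C*-algebra `A` with trace `τ`, and the canonical extension
`τ̃(a + λ1) = τ(a) + λ` to the unitization `A♯ = Unitization ℂ A`, the trace `τ` is MA
if and only if `τ̃` is MA. -/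
theorem isMATrace_unitization_iff (A : Type*) [NonUnitalCStarAlgebra A] [SeparableSpace A]
    (hnonunital : ¬ ∃ e : A, ∀ a : A, e * a = a ∧ a * e = a)
    (τ : A →ₗ[ℂ] ℂ) (hτ : IsTrace τ)
    (τt : Unitization ℂ A →ₗ[ℂ] ℂ) (hτt : ∀ z : Unitization ℂ A, τt z = τ z.snd + z.fst) :
    IsMATrace τ ↔ IsMATrace τt :=
  isMATrace_unitization_iff_general A τ τt hτt
end
end

section
/- Let A be a unital C*-algebra, n ≥ 1, and φ : A → Mₙ a unital *-linear map. Let a, b ∈ A, λ ∈ ℂ and ε > 0 be such that a*a + (b + λ1)*(b + λ1) = ‖a‖·1 in A, and suppose ‖φ(a*a) − φ(a)*φ(a)‖_{2,tr} < ε and ‖φ((b+λ1)*(b+λ1)) − φ(b+λ1)*φ(b+λ1)‖_{2,tr} < ε. Then ‖φ(a)‖_{2,tr}² ≤ ‖a‖ + 2ε. -/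
open scoped Matrix.Norms.L2Operator ComplexOrder
open Matrix Filter TopologicalSpace

noncomputable section

/-! Write `c = b + λ1` and `φ(x*x) = φ(x)*φ(x) + δₓ`. Applying `Re trₙ` to
`φ(a*a) + φ(c*c) = ‖a‖·1` gives `‖φ a‖₂² + ‖φ c‖₂² = ‖a‖ - Re trₙ δₐ - Re trₙ δ_c`, and
`|trₙ δ| ≤ ‖δ‖_{2,tr}` is Cauchy–Schwarz for the Hilbert–Schmidt inner product `tr(x* y)`
against the identity matrix. -/

section HilbertSchmidt

variable {m n 𝕜 : Type*} [Fintype m] [Fintype n] [RCLike 𝕜]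

theorem Matrix.trace_conjTranspose_mul_eq_inner (A B : Matrix m n 𝕜) :
    (Aᴴ * B).trace = inner 𝕜 (WithLp.toLp 2 A.vec) (WithLp.toLp 2 B.vec) := by
  rw [EuclideanSpace.inner_eq_star_dotProduct, dotProduct_comm, ← star_vec_dotProduct_vec]

theorem Matrix.re_trace_conjTranspose_mul_self_nonneg (A : Matrix m n 𝕜) :
    0 ≤ RCLike.re (Aᴴ * A).trace := by
  rw [trace_conjTranspose_mul_eq_inner, inner_self_eq_norm_sq]
  positivity

theorem Matrix.norm_trace_conjTranspose_mul_le (A B : Matrix m n 𝕜) :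
    ‖(Aᴴ * B).trace‖ ≤ √(RCLike.re (Aᴴ * A).trace) * √(RCLike.re (Bᴴ * B).trace) := by
  simp only [trace_conjTranspose_mul_eq_inner, inner_self_eq_norm_sq,
    Real.sqrt_sq (norm_nonneg _)]
  exact norm_inner_le_norm _ _

end HilbertSchmidt

section NormalizedTrace

variable {n : ℕ}

theorem re_trn (α : MatC n) : (trn α).re = (trace α).re / n := by
  rw [trn]; exact_mod_cast Complex.div_ofReal_re _ _

theorem l2tr_sq (α : MatC n) : l2tr α ^ 2 = (trn (star α * α)).re :=
  Real.sq_sqrt <| by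
    rw [re_trn]; exact div_nonneg (re_trace_conjTranspose_mul_self_nonneg α) n.cast_nonneg

theorem norm_trn_le_l2tr (δ : MatC n) : ‖trn δ‖ ≤ l2tr δ := by
  have hcs := norm_trace_conjTranspose_mul_le (1 : MatC n) δ
  rw [conjTranspose_one, one_mul, one_mul, trace_one, Fintype.card_fin, RCLike.natCast_re] at hcs
  rw [trn, l2tr, re_trn, norm_div, Complex.norm_natCast, Real.sqrt_div' _ n.cast_nonneg]
  calc ‖trace δ‖ / n ≤ √n * √(star δ * δ).trace.re / n := by gcongr; exact hcs
    _ = √(star δ * δ).trace.re / √n := by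
      rw [mul_comm, mul_div_assoc, Real.sqrt_div_self', mul_one_div]

theorem trn_add (α β : MatC n) : trn (α + β) = trn α + trn β := by
  simp only [trn, trace_add, add_div]

theorem trn_smul_one (hn : 0 < n) (z : ℂ) : trn (z • (1 : MatC n)) = z := by
  rw [trn, trace_smul, trace_one, Fintype.card_fin, smul_eq_mul, mul_div_assoc,
    div_self (by exact_mod_cast hn.ne'), mul_one]

theorem neg_re_trn_le_l2tr (δ : MatC n) : -(trn δ).re ≤ l2tr δ :=
  (neg_le_abs _).trans <| (Complex.abs_re_le_norm _).trans (norm_trn_le_l2tr δ)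

end NormalizedTrace

theorem l2tr_sq_le_of_almost_multiplicative_general (A : Type*) [CStarAlgebra A]
    (n : ℕ) (hn : 0 < n) (φ : A → MatC n) (hφ : IsStarLinear φ) (hφ1 : φ 1 = 1)
    (a b : A) (l : ℂ) (ε : ℝ)
    (hsum : star a * a + star (b + l • (1 : A)) * (b + l • (1 : A)) = (‖a‖ : ℂ) • (1 : A))
    (h1 : l2tr (φ (star a * a) - star (φ a) * φ a) < ε)
    (h2 : l2tr (φ (star (b + l • (1 : A)) * (b + l • (1 : A)))
        - star (φ (b + l • (1 : A))) * φ (b + l • (1 : A))) < ε) :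
    l2tr (φ a) ^ 2 ≤ ‖a‖ + 2 * ε := by
  obtain ⟨hφlin, -⟩ := hφ
  set c := b + l • (1 : A)
  set δ₁ := φ (star a * a) - star (φ a) * φ a
  set δ₂ := φ (star c * c) - star (φ c) * φ c
  have hdecomp : star (φ a) * φ a + star (φ c) * φ c + δ₁ + δ₂ = (‖a‖ : ℂ) • 1 := by
    rw [← hφ1, ← hφlin.map_smul, ← hsum, hφlin.map_add (star a * a)]
    simp only [δ₁, δ₂]
    abel
  have htrace := congrArg (fun x => (trn x).re) hdecomp
  simp only [trn_add, Complex.add_re, trn_smul_one hn, Complex.ofReal_re, ← l2tr_sq] at htrace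
  linarith [sq_nonneg (l2tr (φ c)), neg_re_trn_le_l2tr δ₁, neg_re_trn_le_l2tr δ₂]

/-- Key norm estimate: if `φ : A → Mₙ` is a unital `*`-linear map, `a*a + (b+λ1)*(b+λ1) = ‖a‖·1`
in `A`, and `φ` is `ε`-almost multiplicative (in `‖·‖_{2,tr}`) on the relevant products, then
`‖φ(a)‖_{2,tr}² ≤ ‖a‖ + 2ε`. -/
theorem l2tr_sq_le_of_almost_multiplicative (A : Type*) [CStarAlgebra A]
    (n : ℕ) (hn : 0 < n) (φ : A → MatC n) (hφ : IsStarLinear φ) (hφ1 : φ 1 = 1)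
    (a b : A) (l : ℂ) (ε : ℝ) (hε : 0 < ε)
    (hsum : star a * a + star (b + l • (1 : A)) * (b + l • (1 : A)) = (‖a‖ : ℂ) • (1 : A))
    (h1 : l2tr (φ (star a * a) - star (φ a) * φ a) < ε)
    (h2 : l2tr (φ (star (b + l • (1 : A)) * (b + l • (1 : A)))
        - star (φ (b + l • (1 : A))) * φ (b + l • (1 : A))) < ε) :
    l2tr (φ a) ^ 2 ≤ ‖a‖ + 2 * ε :=
  l2tr_sq_le_of_almost_multiplicative_general A n hn φ hφ hφ1 a b l ε hsum h1 h2
end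
end
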